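/- For every Schwartz function g : ℝⁿ → ℂ, every ε > 0, and every skew-symmetric linear map J on ℝⁿ, there exists δ > 0 such that for all x ∈ ℝⁿ and all ξ ∈ ℝⁿ with |ξ| < δ, one has (1 + |x|²)^{n/2} · |e^{i⟨x,ξ⟩} g(x + Jξ) − g(x)| < ε. -/

import Mathlib

open MeasureTheory Filter Topology
open scoped InnerProductSpace

noncomputable section

abbrev Euc (n : ℕ) := EuclideanSpace ℝ (Fin n)

lemma norm_exp_I_mul_sub_one_le (θ : ℝ) :
    ‖Complex.exp (Complex.I * θ) - 1‖ ≤ |θ| := by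
  have hre : (Complex.exp (Complex.I * θ) - 1).re = Real.cos θ - 1 := by
    rw [mul_comm]; simp [Complex.exp_ofReal_mul_I_re]
  have him : (Complex.exp (Complex.I * θ) - 1).im = Real.sin θ := by
    rw [mul_comm]; simp [Complex.exp_ofReal_mul_I_im]
  have hs : |Real.sin (θ/2)| ≤ |θ/2| := Real.abs_sin_le_abs
  have hcs : Real.cos (θ/2) ^ 2 = 1/2 + Real.cos θ / 2 := by
    have := Real.cos_sq (θ/2)
    rwa [show 2 * (θ/2) = θ by ring] at this
  have hsc : Real.sin (θ/2) ^ 2 + Real.cos (θ/2) ^ 2 = 1 := Real.sin_sq_add_cos_sq _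
  have key : 2 - 2 * Real.cos θ ≤ θ ^ 2 := by
    have h1 : Real.sin (θ/2) ^ 2 ≤ (θ/2) ^ 2 := by
      rw [← sq_abs (Real.sin _), ← sq_abs (θ/2)]
      exact pow_le_pow_left₀ (abs_nonneg _) hs 2
    nlinarith
  have hnorm : ‖Complex.exp (Complex.I * θ) - 1‖
      = Real.sqrt ((Real.cos θ - 1) ^ 2 + Real.sin θ ^ 2) := by
    rw [Complex.norm_def, Complex.normSq_apply, hre, him]
    ring_nf
  rw [hnorm]
  have : (Real.cos θ - 1) ^ 2 + Real.sin θ ^ 2 ≤ θ ^ 2 := by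
    have := Real.sin_sq_add_cos_sq θ
    nlinarith
  calc Real.sqrt ((Real.cos θ - 1) ^ 2 + Real.sin θ ^ 2) ≤ Real.sqrt (θ ^ 2) :=
        Real.sqrt_le_sqrt this
    _ = |θ| := Real.sqrt_sq_eq_abs θ

lemma mvt_aux {n : ℕ} (g : SchwartzMap (Euc n) ℂ) (J : Euc n →ₗ[ℝ] Euc n)
    (x ξ : Euc n) (M C : ℝ) (hM0 : 0 ≤ M) (hJξM : ‖J ξ‖ ≤ M)
    (hderiv_bound : ∀ y ∈ Metric.closedBall x M, ‖fderiv ℝ (⇑g) y‖ ≤ C) :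
    ‖g (x + J ξ) - g x‖ ≤ C * ‖J ξ‖ := by
  have := Convex.norm_image_sub_le_of_norm_fderiv_le (𝕜 := ℝ) (f := ⇑g)
    (s := Metric.closedBall x M)
    (fun y _ => g.differentiableAt) hderiv_bound (convex_closedBall x M)
    (Metric.mem_closedBall_self hM0)
    (y := x + J ξ) (by rw [Metric.mem_closedBall, dist_eq_norm]; simpa using hJξM)
  simpa using this

set_option maxHeartbeats 1000000 in
/-- weighted uniform continuity estimate: for Schwartz `g`, `ε > 0` and
skew-symmetric `J`, there is `δ > 0` such that for all `x` and all `|ξ| < δ`,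
`(1+|x|²)^{n/2} |e^{i⟨x,ξ⟩} g(x+Jξ) − g(x)| < ε`. -/
theorem weighted_uniform_estimate {n : ℕ} (g : SchwartzMap (Euc n) ℂ) (ε : ℝ) (hε : 0 < ε)
    (J : Euc n →ₗ[ℝ] Euc n) (hJ : ∀ x y : Euc n, ⟪J x, y⟫_ℝ = -⟪x, J y⟫_ℝ) :
    ∃ δ > 0, ∀ x ξ : Euc n, ‖ξ‖ < δ →
      (1 + ‖x‖ ^ 2) ^ ((n : ℝ) / 2) *
        ‖Complex.exp (Complex.I * (⟪x, ξ⟫_ℝ : ℂ)) * g (x + J ξ) - g x‖ < ε := by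
  classical
  obtain ⟨M, hM0, hJbound⟩ : ∃ M : ℝ, 0 ≤ M ∧ ∀ v : Euc n, ‖J v‖ ≤ M * ‖v‖ :=
    ⟨‖LinearMap.toContinuousLinearMap J‖, norm_nonneg _,
      fun v => (LinearMap.toContinuousLinearMap J).le_opNorm v⟩
  obtain ⟨S, hS0, hbound0, hbound1⟩ : ∃ S : ℝ, 0 ≤ S ∧
      (∀ y : Euc n, (1 + ‖y‖) ^ (n+1) * ‖g y‖ ≤ S) ∧
      (∀ y : Euc n, (1 + ‖y‖) ^ n * ‖fderiv ℝ g y‖ ≤ S) := by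
    refine ⟨2 ^ (n+1) *
      (Finset.Iic ((n+1 : ℕ), (1 : ℕ))).sup
        (fun m => SchwartzMap.seminorm ℝ (E := Euc n) (F := ℂ) m.1 m.2) g, ?_, ?_, ?_⟩
    · have h := apply_nonneg ((Finset.Iic ((n+1 : ℕ), (1 : ℕ))).sup
        (fun m => SchwartzMap.seminorm ℝ (E := Euc n) (F := ℂ) m.1 m.2)) g
      positivity
    · intro y
      have := SchwartzMap.one_add_le_sup_seminorm_apply (𝕜 := ℝ)
        (m := ((n+1 : ℕ), (1 : ℕ))) (k := n+1) (n := 0) le_rfl (Nat.zero_le _) g y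
      rwa [norm_iteratedFDeriv_zero] at this
    · intro y
      have := SchwartzMap.one_add_le_sup_seminorm_apply (𝕜 := ℝ)
        (m := ((n+1 : ℕ), (1 : ℕ))) (k := n) (n := 1) (Nat.le_succ n) le_rfl g y
      have h1 : ‖iteratedFDeriv ℝ 1 (⇑g) y‖ = ‖fderiv ℝ (⇑g) y‖ := by
        rw [← norm_iteratedFDeriv_fderiv, norm_iteratedFDeriv_zero]
      rw [h1] at this
      exact this
  set K : ℝ := (1+M)^n * S * M + S with hK
  have hK0 : 0 ≤ K := by positivity
  refine ⟨min 1 (ε / (K+1)), lt_min one_pos (by positivity), ?_⟩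
  intro x ξ hξ
  have hξ1 : ‖ξ‖ ≤ 1 := le_of_lt (lt_of_lt_of_le hξ (min_le_left _ _))
  have hξ0 : 0 ≤ ‖ξ‖ := norm_nonneg _
  -- weight comparison
  have hx0 : (0:ℝ) ≤ ‖x‖ := norm_nonneg _
  have hweight : (1 + ‖x‖ ^ 2) ^ ((n : ℝ) / 2) ≤ (1 + ‖x‖) ^ n := by
    have h1 : (1 + ‖x‖ ^ 2 : ℝ) ^ ((n : ℝ) / 2)
        = ((1 + ‖x‖ ^ 2 : ℝ) ^ ((1:ℝ)/2)) ^ (n : ℕ) := by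
      rw [← Real.rpow_natCast ((1 + ‖x‖ ^ 2 : ℝ) ^ ((1:ℝ)/2)) n,
        ← Real.rpow_mul (by positivity)]
      ring_nf
    rw [h1]
    have h2 : (1 + ‖x‖ ^ 2 : ℝ) ^ ((1:ℝ)/2) ≤ 1 + ‖x‖ := by
      rw [← Real.sqrt_eq_rpow]
      have : (1 + ‖x‖ ^ 2 : ℝ) ≤ (1 + ‖x‖) ^ 2 := by nlinarith
      calc Real.sqrt (1 + ‖x‖ ^ 2) ≤ Real.sqrt ((1 + ‖x‖) ^ 2) := Real.sqrt_le_sqrt this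
        _ = 1 + ‖x‖ := by rw [Real.sqrt_sq (by positivity)]
    exact pow_le_pow_left₀ (by positivity) h2 n
  -- split
  set θ : ℝ := ⟪x, ξ⟫_ℝ with hθ
  have hsplit : Complex.exp (Complex.I * (θ : ℂ)) * g (x + J ξ) - g x
      = Complex.exp (Complex.I * (θ : ℂ)) * (g (x + J ξ) - g x)
        + (Complex.exp (Complex.I * (θ : ℂ)) - 1) * g x := by ring
  have hexp : ‖Complex.exp (Complex.I * (θ : ℂ))‖ = 1 := by
    rw [mul_comm]; exact Complex.norm_exp_ofReal_mul_I θ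
  -- MVT bound on term 1
  have hJξ : ‖J ξ‖ ≤ M * ‖ξ‖ := hJbound ξ
  have hJξM : ‖J ξ‖ ≤ M := le_trans hJξ (by nlinarith)
  have hPpos : (0:ℝ) < (1 + ‖x‖) ^ n := by positivity
  obtain ⟨C, hC⟩ : ∃ C : ℝ, C = (1+M)^n * S / (1 + ‖x‖) ^ n := ⟨_, rfl⟩
  have hderiv_bound : ∀ y ∈ Metric.closedBall x M, ‖fderiv ℝ (⇑g) y‖ ≤ C := by
    intro y hy
    rw [Metric.mem_closedBall, dist_eq_norm] at hy
    have hxy : 1 + ‖x‖ ≤ (1+M) * (1 + ‖y‖) := by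
      have : ‖x‖ ≤ ‖y‖ + M := by
        calc ‖x‖ = ‖y + (x - y)‖ := by rw [add_sub_cancel]
          _ ≤ ‖y‖ + ‖x - y‖ := norm_add_le _ _
          _ ≤ ‖y‖ + M := by rw [← norm_sub_rev]; linarith
      nlinarith [norm_nonneg y]
    have hP : (1 + ‖x‖) ^ n ≤ (1+M)^n * (1 + ‖y‖)^n := by
      rw [← mul_pow]
      exact pow_le_pow_left₀ (by positivity) hxy n
    rw [hC, le_div_iff₀ hPpos]
    calc ‖fderiv ℝ (⇑g) y‖ * (1 + ‖x‖) ^ n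
        ≤ ‖fderiv ℝ (⇑g) y‖ * ((1+M)^n * (1 + ‖y‖)^n) := by
          exact mul_le_mul_of_nonneg_left hP (norm_nonneg _)
      _ = (1+M)^n * ((1 + ‖y‖)^n * ‖fderiv ℝ (⇑g) y‖) := by ring
      _ ≤ (1+M)^n * S := by
          exact mul_le_mul_of_nonneg_left (hbound1 y) (by positivity)
  have hmvt : ‖g (x + J ξ) - g x‖ ≤ C * ‖J ξ‖ :=
    mvt_aux g J x ξ M C hM0 hJξM hderiv_bound
  -- term 2 bound
  have hθle : |θ| ≤ ‖x‖ * ‖ξ‖ := abs_real_inner_le_norm x ξ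
  -- assemble
  have hmain : (1 + ‖x‖) ^ n * ‖Complex.exp (Complex.I * (θ : ℂ)) * g (x + J ξ) - g x‖
      ≤ K * ‖ξ‖ := by
    have hnorm_le : ‖Complex.exp (Complex.I * (θ : ℂ)) * g (x + J ξ) - g x‖
        ≤ ‖g (x + J ξ) - g x‖ + |θ| * ‖g x‖ := by
      rw [hsplit]
      calc ‖Complex.exp (Complex.I * (θ : ℂ)) * (g (x + J ξ) - g x)
            + (Complex.exp (Complex.I * (θ : ℂ)) - 1) * g x‖
          ≤ ‖Complex.exp (Complex.I * (θ : ℂ)) * (g (x + J ξ) - g x)‖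
            + ‖(Complex.exp (Complex.I * (θ : ℂ)) - 1) * g x‖ := norm_add_le _ _
        _ = ‖g (x + J ξ) - g x‖
            + ‖Complex.exp (Complex.I * (θ : ℂ)) - 1‖ * ‖g x‖ := by
            rw [norm_mul, norm_mul, hexp, one_mul]
        _ ≤ ‖g (x + J ξ) - g x‖ + |θ| * ‖g x‖ := by
            gcongr
            exact norm_exp_I_mul_sub_one_le θ
    have h1 : (1 + ‖x‖) ^ n * ‖g (x + J ξ) - g x‖ ≤ (1+M)^n * S * M * ‖ξ‖ := by
      calc (1 + ‖x‖) ^ n * ‖g (x + J ξ) - g x‖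
          ≤ (1 + ‖x‖) ^ n * (C * ‖J ξ‖) := by
            exact mul_le_mul_of_nonneg_left hmvt (by positivity)
        _ = (1+M)^n * S * ‖J ξ‖ := by
            rw [hC]; field_simp
        _ ≤ (1+M)^n * S * (M * ‖ξ‖) := by
            exact mul_le_mul_of_nonneg_left hJξ (by positivity)
        _ = (1+M)^n * S * M * ‖ξ‖ := by ring
    have h2 : (1 + ‖x‖) ^ n * (|θ| * ‖g x‖) ≤ S * ‖ξ‖ := by
      calc (1 + ‖x‖) ^ n * (|θ| * ‖g x‖)
          ≤ (1 + ‖x‖) ^ n * ((‖x‖ * ‖ξ‖) * ‖g x‖) := by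
            gcongr
        _ = ((1 + ‖x‖) ^ n * ‖x‖ * ‖g x‖) * ‖ξ‖ := by ring
        _ ≤ ((1 + ‖x‖) ^ (n+1) * ‖g x‖) * ‖ξ‖ := by
            have : (1 + ‖x‖) ^ n * ‖x‖ ≤ (1 + ‖x‖) ^ (n+1) := by
              rw [pow_succ]
              exact mul_le_mul_of_nonneg_left (by linarith) (by positivity)
            gcongr
        _ ≤ S * ‖ξ‖ := by
            exact mul_le_mul_of_nonneg_right (hbound0 x) hξ0
    calc (1 + ‖x‖) ^ n * ‖Complex.exp (Complex.I * (θ : ℂ)) * g (x + J ξ) - g x‖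
        ≤ (1 + ‖x‖) ^ n * (‖g (x + J ξ) - g x‖ + |θ| * ‖g x‖) := by
          exact mul_le_mul_of_nonneg_left hnorm_le (by positivity)
      _ = (1 + ‖x‖) ^ n * ‖g (x + J ξ) - g x‖ + (1 + ‖x‖) ^ n * (|θ| * ‖g x‖) := by ring
      _ ≤ (1+M)^n * S * M * ‖ξ‖ + S * ‖ξ‖ := add_le_add h1 h2
      _ = K * ‖ξ‖ := by rw [hK]; ring
  have hfinal : (1 + ‖x‖ ^ 2) ^ ((n : ℝ) / 2) *
      ‖Complex.exp (Complex.I * (θ : ℂ)) * g (x + J ξ) - g x‖ ≤ K * ‖ξ‖ := by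
    calc (1 + ‖x‖ ^ 2) ^ ((n : ℝ) / 2) *
        ‖Complex.exp (Complex.I * (θ : ℂ)) * g (x + J ξ) - g x‖
        ≤ (1 + ‖x‖) ^ n * ‖Complex.exp (Complex.I * (θ : ℂ)) * g (x + J ξ) - g x‖ :=
          mul_le_mul_of_nonneg_right hweight (norm_nonneg _)
      _ ≤ K * ‖ξ‖ := hmain
  have hKξ : K * ‖ξ‖ < ε := by
    have hδ : ‖ξ‖ < ε / (K+1) := lt_of_lt_of_le hξ (min_le_right _ _)
    have : (K+1) * ‖ξ‖ < ε := by
      rw [← lt_div_iff₀' (by linarith)]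
      exact hδ
    nlinarith
  exact lt_of_le_of_lt hfinal hKξ
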